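/- arXiv:2110.05148 — 7 statements merged into one kernel-verified Lean document; each statement's English description precedes it below -/
import Mathlib

section
/- The sequence defined by ā_0 = 1 and ā_{k+1} = 1 − p/(1 + ā_k) is strictly decreasing and converges to √(1−p). -/
/-- ā_0 = 1, ā_{k+1} = 1 − p/(1+ā_k) is strictly decreasing and converges to √(1−p). -/
theorem abar_strictAnti_tendsto (p : ℝ) (hp : p ∈ Set.Ioo (0:ℝ) 1)
    (a : ℕ → ℝ) (ha0 : a 0 = 1) (ha : ∀ k, a (k + 1) = 1 - p / (1 + a k)) :
    StrictAnti a ∧ Filter.Tendsto a Filter.atTop (nhds (Real.sqrt (1 - p))) := by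
  obtain ⟨hp0, hp1⟩ := hp
  set s := Real.sqrt (1 - p) with hs
  have h1p : (0:ℝ) < 1 - p := by linarith
  have hs0 : 0 < s := Real.sqrt_pos.mpr h1p
  have hs2 : s ^ 2 = 1 - p := Real.sq_sqrt h1p.le
  have hs1 : s < 1 := by
    nlinarith [hs2, hs0]
  -- invariant: s < a k
  have hlow : ∀ k, s < a k := by
    intro k
    induction k with
    | zero => rw [ha0]; exact hs1
    | succ k ih =>
      have hpos : 0 < 1 + a k := by linarith
      rw [ha k]
      have h : p / (1 + a k) < 1 - s := by
        rw [div_lt_iff₀ hpos]; nlinarith [hs2, ih, hs0]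
      linarith
  have hdec : ∀ k, a (k + 1) < a k := by
    intro k
    have hk := hlow k
    have hpos : 0 < 1 + a k := by linarith
    rw [ha k]
    have h : 1 - a k < p / (1 + a k) := by
      rw [lt_div_iff₀ hpos]; nlinarith [hs2]
    linarith
  have hanti : StrictAnti a := strictAnti_nat_of_succ_lt hdec
  refine ⟨hanti, ?_⟩
  have hbdd : BddBelow (Set.range a) := ⟨s, by rintro x ⟨k, rfl⟩; exact (hlow k).le⟩
  set L := ⨅ n, a n with hL
  have htend : Filter.Tendsto a Filter.atTop (nhds L) :=
    tendsto_atTop_ciInf hanti.antitone hbdd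
  have hsL : s ≤ L := le_ciInf fun n => (hlow n).le
  have hLpos : 0 < 1 + L := by linarith
  -- limit equation
  have htend2 : Filter.Tendsto (fun k => a (k + 1)) Filter.atTop (nhds L) :=
    htend.comp (Filter.tendsto_add_atTop_nat 1)
  have htend3 : Filter.Tendsto (fun k => 1 - p / (1 + a k)) Filter.atTop
      (nhds (1 - p / (1 + L))) := by
    apply Filter.Tendsto.sub tendsto_const_nhds
    exact Filter.Tendsto.div tendsto_const_nhds
      (Filter.Tendsto.add tendsto_const_nhds htend) (ne_of_gt hLpos)
  have heq : L = 1 - p / (1 + L) := by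
    have : Filter.Tendsto (fun k => a (k + 1)) Filter.atTop (nhds (1 - p / (1 + L))) := by
      simpa only [ha] using htend3
    exact tendsto_nhds_unique htend2 this
  have hL2 : L ^ 2 = 1 - p := by
    have := heq
    field_simp at this
    nlinarith [this]
  have : L = s := by
    have h0L : 0 ≤ L := le_trans hs0.le hsL
    rw [hs, ← hL2, Real.sqrt_sq h0L]
  rw [← this]
  exact htend
end

section
/- The sequence defined by b̄_0 = 2pψ and b̄_{k+1} = p(2 ā_k ψ + b̄_k)/(1 + ā_k), where ā_k is defined by ā_0 = 1, ā_{k+1} = 1 − p/(1+ā_k), is strictly decreasing and converges to 2pψ/(1 + √(1−p)). -/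
/-- b̄_0 = 2pψ, b̄_{k+1} = p(2ā_kψ + b̄_k)/(1+ā_k) is strictly decreasing and
    converges to 2pψ/(1+√(1−p)). -/
theorem bbar_strictAnti_tendsto (p ψ : ℝ) (hp : p ∈ Set.Ioo (0:ℝ) 1) (hψ : 0 < ψ)
    (a : ℕ → ℝ) (ha0 : a 0 = 1) (ha : ∀ k, a (k + 1) = 1 - p / (1 + a k))
    (b : ℕ → ℝ) (hb0 : b 0 = 2 * p * ψ)
    (hb : ∀ k, b (k + 1) = p * (2 * a k * ψ + b k) / (1 + a k)) :
    StrictAnti b ∧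
      Filter.Tendsto b Filter.atTop (nhds (2 * p * ψ / (1 + Real.sqrt (1 - p)))) := by
  obtain ⟨hp0, hp1⟩ := hp
  set q := Real.sqrt (1 - p) with hqdef
  have hq2 : q ^ 2 = 1 - p := Real.sq_sqrt (by linarith)
  have hq0 : 0 < q := Real.sqrt_pos.mpr (by linarith)
  have hq1 : q < 1 := by nlinarith [hq2]
  have h1q : (0:ℝ) < 1 + q := by linarith
  set L := 2 * p * ψ / (1 + q) with hLdef
  have hL : L * (1 + q) = 2 * p * ψ := by
    rw [hLdef]; field_simp
  have hL0 : 0 < L := by rw [hLdef]; positivity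
  have hs0 : (0:ℝ) < 1 - q := by linarith
  -- bounds on a
  have haq : ∀ k, q < a k ∧ a k ≤ 1 := by
    intro k
    induction k with
    | zero => rw [ha0]; exact ⟨hq1, le_refl 1⟩
    | succ k ih =>
      obtain ⟨h1, h2⟩ := ih
      have h1a : (0:ℝ) < 1 + a k := by linarith
      rw [ha k]
      constructor
      · have hd : p / (1 + a k) < 1 - q := by
          rw [div_lt_iff₀ h1a]; nlinarith
        linarith
      · have : 0 ≤ p / (1 + a k) := by positivity
        linarith
  have hadec : ∀ k, a (k + 1) < a k := by
    intro k
    obtain ⟨h1, h2⟩ := haq k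
    have h1a : (0:ℝ) < 1 + a k := by linarith
    have h3 : (1 - a k) * (1 + a k) < p := by nlinarith
    have h4 : 1 - a k < p / (1 + a k) := (lt_div_iff₀ h1a).mpr h3
    rw [ha k]; linarith
  -- geometric bound for a
  have habnd : ∀ k, a k - q ≤ (1 - q) ^ (k + 1) := by
    intro k
    induction k with
    | zero => rw [ha0, pow_one]
    | succ k ih =>
      obtain ⟨h1, h2⟩ := haq k
      have h1a : (0:ℝ) < 1 + a k := by linarith
      have key : a (k + 1) - q ≤ (1 - q) * (a k - q) := by
        have hident : (1 - q - (1 - q) * (a k - q)) * (1 + a k)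
            = p - (1 - q) * (a k) * (a k - q) := by
          linear_combination (-1 : ℝ) * hq2
        have hnn : 0 ≤ (1 - q) * (a k) * (a k - q) :=
          mul_nonneg (mul_nonneg hs0.le (by linarith)) (by linarith)
        have h3 : (1 - q - (1 - q) * (a k - q)) * (1 + a k) ≤ p := by
          rw [hident]; linarith
        have h4 : 1 - q - (1 - q) * (a k - q) ≤ p / (1 + a k) := (le_div_iff₀ h1a).mpr h3
        rw [ha k]; linarith
      calc a (k + 1) - q ≤ (1 - q) * (a k - q) := key
        _ ≤ (1 - q) * (1 - q) ^ (k + 1) := by nlinarith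
        _ = (1 - q) ^ (k + 2) := by rw [pow_succ]; ring
  -- bounds on b
  have hbb : ∀ k, L < b k ∧ b k ≤ 2 * p * ψ := by
    intro k
    induction k with
    | zero =>
      rw [hb0]
      refine ⟨?_, le_refl _⟩
      rw [hLdef, div_lt_iff₀ h1q]; nlinarith
    | succ k ih =>
      obtain ⟨hlow, hhigh⟩ := ih
      obtain ⟨h1, h2⟩ := haq k
      have h1a : (0:ℝ) < 1 + a k := by linarith
      have hid : p * (2 * a k * ψ + b k)
          = L * (1 + a k) + p * (b k - L) + L * q * (a k - q) := by
        linear_combination (-(a k)) * hL + L * hq2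
      rw [hb k]
      constructor
      · rw [lt_div_iff₀ h1a]
        nlinarith [mul_pos hL0 (mul_pos hq0 (sub_pos.mpr h1)),
          mul_pos hp0 (sub_pos.mpr hlow)]
      · rw [div_le_iff₀ h1a]
        nlinarith [mul_pos hp0 hψ]
  -- b strictly decreasing
  have hmono : ∀ k, b (k + 1) < b k := by
    intro k
    induction k with
    | zero =>
      rw [hb 0, ha0, hb0]
      rw [div_lt_iff₀ (by norm_num : (0:ℝ) < 1 + 1)]
      nlinarith [mul_pos (mul_pos hp0 hψ) (sub_pos.mpr hp1)]
    | succ k ih =>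
      obtain ⟨h1, h2⟩ := haq k
      obtain ⟨h1', h2'⟩ := haq (k + 1)
      obtain ⟨hlow, hhigh⟩ := hbb k
      have h1a : (0:ℝ) < 1 + a k := by linarith
      have h1a' : (0:ℝ) < 1 + a (k + 1) := by linarith
      have hak := hadec k
      have hb2ψ : b k < 2 * ψ := by nlinarith
      rw [hb (k + 1)]
      conv_rhs => rw [hb k]
      rw [div_lt_div_iff₀ h1a' h1a]
      nlinarith [mul_pos (mul_pos hp0 (sub_pos.mpr hak)) (sub_pos.mpr hb2ψ),
        mul_pos (mul_pos hp0 h1a) (sub_pos.mpr ih)]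
  -- key contraction estimate
  have hkey : ∀ k, b (k + 1) - L ≤ (1 - q) * (b k - L) + L * q * (1 - q) ^ (k + 1) := by
    intro k
    obtain ⟨h1, h2⟩ := haq k
    obtain ⟨hlow, hhigh⟩ := hbb k
    have h1a : (0:ℝ) < 1 + a k := by linarith
    have ht := habnd k
    have ht0 : (0:ℝ) < (1 - q) ^ (k + 1) := pow_pos hs0 _
    have ha0' : 0 < a k := lt_trans hq0 h1
    have hid2 : ((1 - q) * (b k - L) + L * q * (1 - q) ^ (k + 1) + L) * (1 + a k)
        - p * (2 * a k * ψ + b k)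
        = (1 - q) * (b k - L) * (a k - q) + L * q * ((1 - q) ^ (k + 1) - (a k - q))
          + L * q * (1 - q) ^ (k + 1) * a k := by
      linear_combination (a k) * hL - (b k) * hq2
    rw [hb k, sub_le_iff_le_add, div_le_iff₀ h1a]
    linarith [hid2, mul_nonneg (mul_nonneg hs0.le (sub_pos.mpr hlow).le) (sub_pos.mpr h1).le,
      mul_nonneg (mul_nonneg hL0.le hq0.le) (by linarith : (0:ℝ) ≤ (1 - q) ^ (k + 1) - (a k - q)),
      mul_nonneg (mul_nonneg (mul_nonneg hL0.le hq0.le) ht0.le) ha0'.le]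
  -- explicit bound
  have hebound : ∀ k : ℕ, b k - L ≤ (b 0 - L + L * q * k) * (1 - q) ^ k := by
    intro k
    induction k with
    | zero => simp
    | succ k ih =>
      have h := hkey k
      have h2 : (1 - q) * (b k - L) ≤ (1 - q) * ((b 0 - L + L * q * k) * (1 - q) ^ k) :=
        mul_le_mul_of_nonneg_left ih hs0.le
      have h3 : b (k + 1) - L
          ≤ (1 - q) * ((b 0 - L + L * q * k) * (1 - q) ^ k) + L * q * (1 - q) ^ (k + 1) := by
        linarith
      calc b (k + 1) - L ≤ _ := h3
        _ = (b 0 - L + L * q * (k + 1 : ℕ)) * (1 - q) ^ (k + 1) := by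
          rw [pow_succ]; push_cast; ring
  -- tendsto
  have habs : |1 - q| < 1 := by rw [abs_lt]; constructor <;> linarith
  have t1 : Filter.Tendsto (fun k : ℕ => (1 - q) ^ k) Filter.atTop (nhds 0) :=
    tendsto_pow_atTop_nhds_zero_of_lt_one hs0.le (by linarith)
  have t2 : Filter.Tendsto (fun k : ℕ => (k : ℝ) * (1 - q) ^ k) Filter.atTop (nhds 0) :=
    tendsto_self_mul_const_pow_of_abs_lt_one habs
  have htend0 : Filter.Tendsto (fun k : ℕ => (b 0 - L + L * q * k) * (1 - q) ^ k)
      Filter.atTop (nhds 0) := by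
    have := ((t1.const_mul (b 0 - L)).add (t2.const_mul (L * q)))
    simp only [mul_zero, add_zero] at this
    convert this using 2 with k
    ring
  have hetend : Filter.Tendsto (fun k => b k - L) Filter.atTop (nhds 0) :=
    squeeze_zero (fun k => (sub_pos.mpr (hbb k).1).le) hebound htend0
  refine ⟨strictAnti_nat_of_succ_lt hmono, ?_⟩
  have hbt : Filter.Tendsto b Filter.atTop (nhds L) := by
    have h := hetend.add_const L
    simp only [sub_add_cancel, zero_add] at h
    exact h
  exact hbt
end

section
/- Let a, b, c, d, ψ be reals with d > 0, ψ > 0, a, b ≥ 0. Define g(x,u) = (ψ + x − u)^2 + d + a u^2 + b u + c and μ(x) = (x + ψ − b/2)/(1 + a). If (1−a)ψ ≤ b/2 ≤ ψ, then for x ∈ [0,ψ]: g(x, μ(x)) ≤ (ψ + x)^2 + c if and only if x ≥ θ(a,b), where θ(a,b) = √(d(1+a)) + b/2 − ψ. -/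
/-- With g(x,u) = (ψ+x−u)² + d + au² + bu + c and μ(x) = (x+ψ−b/2)/(1+a),
    if (1−a)ψ ≤ b/2 ≤ ψ then for x ∈ [0,ψ]:
    g(x, μ(x)) ≤ (ψ+x)² + c ↔ x ≥ θ(a,b) = √(d(1+a)) + b/2 − ψ. -/
theorem g_mu_threshold (a b c d ψ : ℝ) (hd : 0 < d) (hψ : 0 < ψ)
    (ha : 0 ≤ a) (hb : 0 ≤ b)
    (h1 : (1 - a) * ψ ≤ b / 2) (h2 : b / 2 ≤ ψ)
    (x : ℝ) (hx : x ∈ Set.Icc (0:ℝ) ψ) :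
    ((ψ + x - (x + ψ - b / 2) / (1 + a)) ^ 2 + d
        + a * ((x + ψ - b / 2) / (1 + a)) ^ 2
        + b * ((x + ψ - b / 2) / (1 + a)) + c ≤ (ψ + x) ^ 2 + c)
      ↔ x ≥ Real.sqrt (d * (1 + a)) + b / 2 - ψ := by
  obtain ⟨hx0, hx1⟩ := hx
  have ha1 : (0:ℝ) < 1 + a := by linarith
  have hsm : 0 ≤ x + ψ - b / 2 := by linarith
  set t := Real.sqrt (d * (1 + a)) with ht
  have ht0 : 0 ≤ t := Real.sqrt_nonneg _
  have ht2 : t ^ 2 = d * (1 + a) := Real.sq_sqrt (by positivity)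
  have heq : (ψ + x - (x + ψ - b / 2) / (1 + a)) ^ 2 + d
        + a * ((x + ψ - b / 2) / (1 + a)) ^ 2
        + b * ((x + ψ - b / 2) / (1 + a)) + c
      = (ψ + x) ^ 2 + c + d - (x + ψ - b / 2) ^ 2 / (1 + a) := by
    field_simp
    ring
  rw [heq]
  constructor
  · intro h
    have hdle : d * (1 + a) ≤ (x + ψ - b / 2) ^ 2 :=
      (le_div_iff₀ ha1).mp (by linarith : d ≤ (x + ψ - b / 2) ^ 2 / (1 + a))
    have : t ≤ x + ψ - b / 2 := by
      nlinarith [sq_nonneg (t - (x + ψ - b/2)), sq_nonneg (t + (x + ψ - b/2))]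
    linarith
  · intro h
    have h' : t ≤ x + ψ - b / 2 := by linarith
    have : d * (1 + a) ≤ (x + ψ - b / 2) ^ 2 := by nlinarith
    have : d ≤ (x + ψ - b / 2) ^ 2 / (1 + a) := (le_div_iff₀ ha1).mpr (by linarith)
    linarith
end

section
/- Let p ∈ (0,1), ψ > 0, ã_∞ = 1/p − √(4−2p)/(2p) and b̃_∞ = ã_∞(2−p)ψ/(1 − ã_∞ p). Then for all x ∈ [0,ψ], 0 < ã_∞ x + b̃_∞ < ψ. -/
/-!
Writing `s = √(4 - 2p)`, the relation `s² = 4 - 2p` gives `ã_∞ = 1 / (2 + s)` and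
`b̃_∞ = s ψ / (2 + s)`, so `ã_∞ x + b̃_∞ = (x + s ψ) / (2 + s)`. For `x ∈ [0, ψ]` this is a
positive number at most `(1 + s) ψ / (2 + s) < ψ`.
-/

section

variable {p s : ℝ}

lemma one_div_sub_div_two_mul_eq (hp : p ≠ 0) (hs : 0 ≤ s) (hs2 : s ^ 2 = 4 - 2 * p) :
    1 / p - s / (2 * p) = 1 / (2 + s) := by
  field_simp
  linear_combination -hs2

lemma one_sub_one_div_mul_eq (hs : 0 ≤ s) (hs2 : s ^ 2 = 4 - 2 * p) :
    1 - 1 / (2 + s) * p = s / 2 := by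
  field_simp
  linear_combination -hs2

lemma one_div_mul_div_one_sub_eq (ψ : ℝ) (hs : 0 < s) (hs2 : s ^ 2 = 4 - 2 * p) :
    1 / (2 + s) * (2 - p) * ψ / (1 - 1 / (2 + s) * p) = s / (2 + s) * ψ := by
  rw [one_sub_one_div_mul_eq hs.le hs2]
  field_simp
  linear_combination -ψ * hs2

end

lemma one_div_mul_add_div_mul_mem_Ioo {s ψ x : ℝ} (hs : 0 < s) (hψ : 0 < ψ)
    (hx : x ∈ Set.Icc 0 ψ) :
    0 < 1 / (2 + s) * x + s / (2 + s) * ψ ∧ 1 / (2 + s) * x + s / (2 + s) * ψ < ψ := by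
  obtain ⟨hx0, hxψ⟩ := hx
  rw [show 1 / (2 + s) * x + s / (2 + s) * ψ = (x + s * ψ) / (2 + s) by ring]
  constructor
  · positivity
  · rw [div_lt_iff₀ (by positivity)]
    nlinarith

/-- For all x ∈ [0,ψ], 0 < ã_∞ x + b̃_∞ < ψ. -/
theorem atilde_affine_in_range (p ψ : ℝ) (hp : p ∈ Set.Ioo (0:ℝ) 1) (hψ : 0 < ψ) :
    ∀ x ∈ Set.Icc (0:ℝ) ψ,
      0 < (1 / p - Real.sqrt (4 - 2 * p) / (2 * p)) * x
            + (1 / p - Real.sqrt (4 - 2 * p) / (2 * p)) * (2 - p) * ψ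
              / (1 - (1 / p - Real.sqrt (4 - 2 * p) / (2 * p)) * p) ∧
        (1 / p - Real.sqrt (4 - 2 * p) / (2 * p)) * x
            + (1 / p - Real.sqrt (4 - 2 * p) / (2 * p)) * (2 - p) * ψ
              / (1 - (1 / p - Real.sqrt (4 - 2 * p) / (2 * p)) * p) < ψ := by
  intro x hx
  obtain ⟨hp0, hp1⟩ := hp
  have hs : 0 < Real.sqrt (4 - 2 * p) := Real.sqrt_pos.2 (by linarith)
  have hs2 : Real.sqrt (4 - 2 * p) ^ 2 = 4 - 2 * p := Real.sq_sqrt (by linarith)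
  rw [one_div_sub_div_two_mul_eq hp0.ne' hs.le hs2, one_div_mul_div_one_sub_eq ψ hs hs2]
  exact one_div_mul_add_div_mul_mem_Ioo hs hψ hx
end

section
/- Fix p ∈ (0,1), ψ > 0, d > 0. Let ã_∞, b̃_∞ be as defined and π(x) = ã_∞ x + b̃_∞. Define h(x,u) = (ψ + x − u)(ψ − u) + d + u(u + p(ψ − ã_∞ u − b̃_∞)). Then for x ∈ [0,ψ]: ψ(ψ + x) ≤ h(x, π(x)) if and only if x ≤ x_∞ := (√(2 ã_∞ d) − b̃_∞)/ã_∞. -/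
set_option maxHeartbeats 1000000


/-- With h(x,u) = (ψ+x−u)(ψ−u) + d + u(u + p(ψ − ã_∞u − b̃_∞)) and
    π(x) = ã_∞ x + b̃_∞, for x ∈ [0,ψ]:
    ψ(ψ+x) ≤ h(x, π(x)) ↔ x ≤ x_∞ = (√(2ã_∞d) − b̃_∞)/ã_∞. -/
theorem nash_threshold_iff (p ψ d : ℝ) (hp : p ∈ Set.Ioo (0:ℝ) 1) (hψ : 0 < ψ) (hd : 0 < d)
    (aInf bInf : ℝ)
    (haInf : aInf = 1 / p - Real.sqrt (4 - 2 * p) / (2 * p))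
    (hbInf : bInf = aInf * (2 - p) * ψ / (1 - aInf * p))
    (x : ℝ) (hx : x ∈ Set.Icc (0:ℝ) ψ) :
    (ψ * (ψ + x) ≤
        (ψ + x - (aInf * x + bInf)) * (ψ - (aInf * x + bInf)) + d
          + (aInf * x + bInf) *
              ((aInf * x + bInf) + p * (ψ - aInf * (aInf * x + bInf) - bInf)))
      ↔ x ≤ (Real.sqrt (2 * aInf * d) - bInf) / aInf := by
  obtain ⟨hp0, hp1⟩ := hp
  obtain ⟨hx0, hxψ⟩ := hx
  set s := Real.sqrt (4 - 2 * p) with hs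
  have h4 : (0:ℝ) < 4 - 2 * p := by linarith
  have hs2 : s ^ 2 = 4 - 2 * p := Real.sq_sqrt h4.le
  have hs0 : 0 < s := Real.sqrt_pos.mpr h4
  have hslt2 : s < 2 := by nlinarith [hs2, hs0]
  have ha_eq : aInf = (2 - s) / (2 * p) := by
    rw [haInf]; field_simp
  have ha0 : 0 < aInf := by
    rw [ha_eq]; apply div_pos (by linarith) (by linarith)
  have hA : 4 * aInf - 2 * p * aInf ^ 2 = 1 := by
    rw [ha_eq]; field_simp; nlinarith [hs2]
  have h1ap : 1 - aInf * p = s / 2 := by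
    rw [ha_eq]; field_simp; ring
  have h1ap0 : 0 < 1 - aInf * p := by rw [h1ap]; positivity
  have hB : bInf * (1 - aInf * p) = aInf * (2 - p) * ψ := by
    rw [hbInf]; field_simp
  have hb0 : 0 < bInf := by
    have h2 : 0 < aInf * (2 - p) * ψ := by
      apply mul_pos (mul_pos ha0 (by linarith)) hψ
    nlinarith [hB, h1ap0]
  have hu0 : 0 ≤ aInf * x + bInf := by positivity
  have key : 2 * aInf *
      (((ψ + x - (aInf * x + bInf)) * (ψ - (aInf * x + bInf)) + d
          + (aInf * x + bInf) *
              ((aInf * x + bInf) + p * (ψ - aInf * (aInf * x + bInf) - bInf)))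
        - ψ * (ψ + x)) = 2 * aInf * d - (aInf * x + bInf) ^ 2 := by
    linear_combination ((aInf * x + bInf) ^ 2) * hA + (2 * (aInf * x + bInf)) * hB
  have hsq : (ψ * (ψ + x) ≤
        (ψ + x - (aInf * x + bInf)) * (ψ - (aInf * x + bInf)) + d
          + (aInf * x + bInf) *
              ((aInf * x + bInf) + p * (ψ - aInf * (aInf * x + bInf) - bInf)))
      ↔ (aInf * x + bInf) ^ 2 ≤ 2 * aInf * d := by
    constructor <;> intro h <;> nlinarith [key, ha0]
  rw [hsq, ← Real.le_sqrt hu0 (by positivity), le_div_iff₀ ha0]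
  constructor <;> intro h <;> nlinarith [h]
end

section
/- Let p ∈ (0,1), ψ > 0. With ã_k defined by ã_{-1}=0, ã_k = 1/(2(2 − p ã_{k-1})), and b̃_k by b̃_{-1}=0, b̃_k = ((2−p)ψ + p b̃_{k-1})/(2(2 − p ã_{k-1})), the sequence b̃_k converges to b̃_∞ = ã_∞ (2−p)ψ/(1 − ã_∞ p), where ã_∞ = lim ã_k. -/
set_option maxHeartbeats 1000000

/-- b̃_k converges to b̃_∞ = ã_∞(2−p)ψ/(1 − ã_∞ p).
    (Sequences indexed so that `a 0`, `b 0` are ã_{-1}, b̃_{-1}.) -/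
theorem btilde_tendsto (p ψ : ℝ) (hp : p ∈ Set.Ioo (0:ℝ) 1) (hψ : 0 < ψ)
    (a : ℕ → ℝ) (ha0 : a 0 = 0) (ha : ∀ k, a (k + 1) = 1 / (2 * (2 - p * a k)))
    (b : ℕ → ℝ) (hb0 : b 0 = 0)
    (hb : ∀ k, b (k + 1) = ((2 - p) * ψ + p * b k) / (2 * (2 - p * a k)))
    (aInf : ℝ) (haInf : aInf = 1 / p - Real.sqrt (4 - 2 * p) / (2 * p)) :
    Filter.Tendsto b Filter.atTop (nhds (aInf * (2 - p) * ψ / (1 - aInf * p))) := by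
  obtain ⟨hp0, hp1⟩ := hp
  have h4 : (0:ℝ) ≤ 4 - 2*p := by nlinarith
  set s := Real.sqrt (4 - 2*p) with hs_def
  have hs2 : s^2 = 4 - 2*p := Real.sq_sqrt h4
  have hsnn : 0 ≤ s := Real.sqrt_nonneg _
  have hsle2 : s ≤ 2 := by nlinarith
  -- aInf bounds
  have hA : 2*p*aInf = 2 - s := by
    rw [haInf]; field_simp
  have hA0 : 0 ≤ aInf := by nlinarith
  have hAhalf : aInf ≤ 1/2 := by nlinarith
  -- fixed point identity
  have hfix : 2*aInf*(2 - p*aInf) = 1 := by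
    have h2p : (2*p) ≠ 0 := by positivity
    have : (2*p)*(2*aInf*(2 - p*aInf)) = (2*p)*1 := by nlinarith [hA, hs2]
    exact mul_left_cancel₀ h2p this
  set L : ℝ := aInf * (2 - p) * ψ / (1 - aInf * p) with hL_def
  have hAplt : aInf * p < 1 := by nlinarith
  have hLfix : L = aInf*((2-p)*ψ + p*L) := by
    have h1 : (1 - aInf * p) ≠ 0 := by nlinarith
    rw [hL_def]; field_simp; ring
  -- invariants
  have inv : ∀ k, 0 ≤ a k ∧ a k ≤ 1/2 ∧ 0 ≤ b k ∧ b k ≤ (2-p)*ψ := by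
    intro k
    induction k with
    | zero =>
      refine ⟨by rw [ha0], by rw [ha0]; norm_num, by rw [hb0], by rw [hb0]; nlinarith⟩
    | succ k ih =>
      obtain ⟨ha1, ha2, hb1, hb2⟩ := ih
      have hD : (3:ℝ) ≤ 2 * (2 - p * a k) := by nlinarith
      have hDpos : (0:ℝ) < 2 * (2 - p * a k) := by linarith
      refine ⟨?_, ?_, ?_, ?_⟩
      · rw [ha k]; positivity
      · rw [ha k]
        rw [div_le_iff₀ hDpos]; nlinarith
      · rw [hb k]
        apply div_nonneg (by nlinarith) (by nlinarith)
      · rw [hb k]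
        rw [div_le_iff₀ hDpos]; nlinarith
  -- contraction for a
  have hacon : ∀ k, |a (k+1) - aInf| ≤ (1/3) * |a k - aInf| := by
    intro k
    obtain ⟨ha1, ha2, _, _⟩ := inv k
    have hD : (3:ℝ) ≤ 2 * (2 - p * a k) := by nlinarith
    have hDpos : (0:ℝ) < 2 * (2 - p * a k) := by linarith
    have hD' : (3:ℝ) ≤ 2 * (2 - p * aInf) := by nlinarith
    have hAfix : aInf = 1 / (2 * (2 - p * aInf)) := by
      rw [eq_div_iff (ne_of_gt (by nlinarith))]; linear_combination hfix
    have hprod : (0:ℝ) < (2*(2 - p * a k)) * (2*(2 - p * aInf)) := by nlinarith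
    have hDne : (2*(2 - p * a k)) ≠ 0 := ne_of_gt hDpos
    have hD'ne : (2*(2 - p * aInf)) ≠ 0 := by
      have : (0:ℝ) < 2*(2 - p * aInf) := by nlinarith
      exact ne_of_gt this
    have key : a (k+1) - aInf = (2*p*(a k - aInf)) / ((2*(2 - p * a k)) * (2*(2 - p * aInf))) := by
      rw [ha k]
      nth_rewrite 1 [hAfix]
      rw [div_sub_div _ _ hDne hD'ne]
      congr 1
      ring
    rw [key, abs_div]
    rw [abs_of_pos hprod]
    rw [div_le_iff₀ hprod]
    have h1 : |2*p*(a k - aInf)| = 2*p*|a k - aInf| := by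
      rw [abs_mul, abs_of_pos (by linarith : (0:ℝ) < 2*p)]
    rw [h1]
    have h9 : (9:ℝ) ≤ (2*(2 - p * a k)) * (2*(2 - p * aInf)) := by nlinarith
    nlinarith [mul_le_mul_of_nonneg_left h9 (abs_nonneg (a k - aInf)),
      mul_le_mul_of_nonneg_right hp1.le (abs_nonneg (a k - aInf)),
      abs_nonneg (a k - aInf)]
  -- error recursion for b
  have hbrec : ∀ k, |b (k+1) - L| ≤ 4*ψ*|a (k+1) - aInf| + (1/2)*|b k - L| := by
    intro k
    obtain ⟨ha1, ha2, hb1, hb2⟩ := inv k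
    have hDpos : (0:ℝ) < 2 * (2 - p * a k) := by nlinarith
    have hbval : b (k+1) = a (k+1) * ((2-p)*ψ + p * b k) := by
      rw [hb k, ha k]; field_simp
    have key : b (k+1) - L = (a (k+1) - aInf)*((2-p)*ψ + p * b k) + aInf*p*(b k - L) := by
      linear_combination hbval - hLfix
    rw [key]
    have h1 : |(a (k+1) - aInf)*((2-p)*ψ + p * b k)| ≤ 4*ψ*|a (k+1) - aInf| := by
      rw [abs_mul]
      have hN : |(2-p)*ψ + p * b k| ≤ 4*ψ := by
        rw [abs_of_nonneg (by nlinarith)]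
        nlinarith
      nlinarith [abs_nonneg (a (k+1) - aInf)]
    have h2 : |aInf*p*(b k - L)| ≤ (1/2)*|b k - L| := by
      rw [abs_mul]
      have : |aInf*p| ≤ 1/2 := by
        rw [abs_of_nonneg (by positivity)]; nlinarith
      nlinarith [abs_nonneg (b k - L)]
    calc |(a (k+1) - aInf)*((2-p)*ψ + p * b k) + aInf*p*(b k - L)|
        ≤ |(a (k+1) - aInf)*((2-p)*ψ + p * b k)| + |aInf*p*(b k - L)| := abs_add_le _ _
      _ ≤ 4*ψ*|a (k+1) - aInf| + (1/2)*|b k - L| := by linarith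
  -- Lyapunov function
  set E : ℕ → ℝ := fun k => 4*ψ*|a k - aInf| + |b k - L| with hE_def
  have hEstep : ∀ k, E (k+1) ≤ (2/3) * E k := by
    intro k
    have h1 := hacon k
    have h2 := hbrec k
    simp only [hE_def]
    nlinarith [abs_nonneg (a k - aInf), abs_nonneg (b k - L), hψ]
  have hEgeom : ∀ k, E k ≤ E 0 * (2/3)^k := by
    intro k
    induction k with
    | zero => simp
    | succ k ih =>
      calc E (k+1) ≤ (2/3) * E k := hEstep k
        _ ≤ (2/3) * (E 0 * (2/3)^k) := by
            have : (0:ℝ) ≤ 2/3 := by norm_num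
            nlinarith
        _ = E 0 * (2/3)^(k+1) := by ring
  have hE0 : 0 ≤ E 0 := by positivity
  have hgeo : Filter.Tendsto (fun k => E 0 * (2/3:ℝ)^k) Filter.atTop (nhds 0) := by
    simpa using (tendsto_pow_atTop_nhds_zero_of_lt_one (by norm_num) (by norm_num)).const_mul (E 0)
  have habs : Filter.Tendsto (fun k => |b k - L|) Filter.atTop (nhds 0) := by
    apply squeeze_zero (fun k => abs_nonneg _) (fun k => ?_) hgeo
    calc |b k - L| ≤ E k := by simp only [hE_def]; nlinarith [abs_nonneg (a k - aInf)]
      _ ≤ E 0 * (2/3)^k := hEgeom k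
  have hsub : Filter.Tendsto (fun k => b k - L) Filter.atTop (nhds 0) := by
    rw [tendsto_zero_iff_norm_tendsto_zero]
    simpa [Real.norm_eq_abs] using habs
  have := hsub.add_const L
  simpa using this
end

section
/- Let p ∈ (0,1) and ã_∞ = 1/p − √(4−2p)/(2p), b̃_0 = (2−p)ψ/4, b̃_∞ = ã_∞(2−p)ψ/(1−ã_∞ p) with ψ > 0. Then b̃_0 < b̃_∞, and consequently ã_∞ x + b̃_∞ > ã_0 x + b̃_0 for all x ∈ [0,ψ], where ã_0 = 1/4. -/
/-- b̃_0 < b̃_∞, and consequently ã_∞ x + b̃_∞ > ã_0 x + b̃_0 on [0,ψ],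
    where ã_0 = 1/4 and b̃_0 = (2−p)ψ/4. -/
theorem btilde0_lt_btildeInf (p ψ : ℝ) (hp : p ∈ Set.Ioo (0:ℝ) 1) (hψ : 0 < ψ)
    (aInf bInf : ℝ)
    (haInf : aInf = 1 / p - Real.sqrt (4 - 2 * p) / (2 * p))
    (hbInf : bInf = aInf * (2 - p) * ψ / (1 - aInf * p)) :
    (2 - p) * ψ / 4 < bInf ∧
      ∀ x ∈ Set.Icc (0:ℝ) ψ, aInf * x + bInf > (1 / 4) * x + (2 - p) * ψ / 4 := by
  obtain ⟨hp0, hp1⟩ := hp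
  set s := Real.sqrt (4 - 2 * p) with hs
  have hs0 : 0 < s := Real.sqrt_pos.2 (by linarith)
  have hsq : s ^ 2 = 4 - 2 * p := Real.sq_sqrt (by linarith)
  have hs1 : s < 2 - p / 2 := (Real.sqrt_lt' (by linarith)).2 (by nlinarith)
  have haP : aInf = (2 - s) / (2 * p) := by
    rw [haInf]; field_simp
  have ha4 : 1 / 4 < aInf := by
    rw [haP, lt_div_iff₀ (by positivity)]; linarith
  have hden : 1 - aInf * p = s / 2 := by
    rw [haP]; field_simp; ring
  have hbw : bInf = (2 - s) * (2 - p) * ψ / (p * s) := by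
    rw [hbInf, hden, haP]; field_simp
  have key : s * (4 + p) < 8 := by nlinarith
  have hb : (2 - p) * ψ / 4 < bInf := by
    rw [hbw, div_lt_div_iff₀ (by norm_num) (by positivity)]
    nlinarith [mul_pos (show (0:ℝ) < 2 - p by linarith) hψ]
  refine ⟨hb, fun x hx => ?_⟩
  have hx0 := hx.1
  nlinarith
end
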